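/- Let T' be a unimodular triangulation of a lattice polytope P' ⊂ ℝ^N and T'' a unimodular triangulation of a lattice polytope P'' ⊂ ℝ^M, and suppose there exists an injective ℤ-affine map ψ : ℝ^N → ℝ^M (an affine map sending ℤ^N into ℤ^M) which maps every simplex of T' affine-isomorphically onto some simplex of T''. Then the ℂ-algebra homomorphism ψ* on polynomial rings defined on generators by ψ*(x_{p''}) = x_{ψ^{-1}(p'')} if p'' lies in the image of ψ and ψ*(x_{p''}) = 0 otherwise satisfies ψ*(I'') ⊆ I' and ψ*(J'') ⊆ J', and hence induces a graded ℂ-algebra homomorphism ψ* : A*(T'') → A*(T'). -/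

import Mathlib

open scoped BigOperators Pointwise
open MvPolynomial

noncomputable section

namespace EhrhartChow

/-- A point of `ℝ^N` with integer coordinates. -/
def IsLatticePoint {N : ℕ} (x : Fin N → ℝ) : Prop := ∀ i, ∃ z : ℤ, x i = (z : ℝ)

/-- A lattice polytope: the convex hull of finitely many lattice points. -/
def IsLatticePolytope {N : ℕ} (P : Set (Fin N → ℝ)) : Prop :=
  ∃ S : Finset (Fin N → ℝ), (∀ p ∈ S, IsLatticePoint p) ∧
    P = convexHull ℝ (S : Set (Fin N → ℝ))

/-- Dimension of a subset of `ℝ^N`. -/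
def setDim {N : ℕ} (s : Set (Fin N → ℝ)) : ℕ := Module.finrank ℝ ↥(vectorSpan ℝ s)

/-- The lattice points belonging to a set `P`. -/
def latticePoints {N : ℕ} (P : Set (Fin N → ℝ)) : Set (Fin N → ℝ) :=
  {x | x ∈ P ∧ IsLatticePoint x}

/-- A triangulation of a polytope `P ⊆ ℝ^N`, encoded by the vertex sets of its simplices. -/
structure Triangulation (N : ℕ) (P : Set (Fin N → ℝ)) where
  faces : Set (Finset (Fin N → ℝ))
  lattice_vertices : ∀ V ∈ faces, ∀ p ∈ V, IsLatticePoint p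
  indep : ∀ V ∈ faces, AffineIndependent ℝ (fun x : (V : Set (Fin N → ℝ)) => (x.1 : Fin N → ℝ))
  union_eq : (⋃ V ∈ faces, convexHull ℝ (V : Set (Fin N → ℝ))) = P
  down_closed : ∀ V ∈ faces, ∀ W : Finset (Fin N → ℝ), W ⊆ V → W ∈ faces
  inter_face : ∀ V ∈ faces, ∀ W ∈ faces,
    convexHull ℝ (V : Set (Fin N → ℝ)) ∩ convexHull ℝ (W : Set (Fin N → ℝ)) =
      convexHull ℝ ((V : Set (Fin N → ℝ)) ∩ (W : Set (Fin N → ℝ)))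

namespace Triangulation

variable {N : ℕ} {P : Set (Fin N → ℝ)}

/-- Unimodularity: the vertex set of every simplex can be completed to an affine
basis of `ℤ^N`. -/
def IsUnimodular (T : Triangulation N P) : Prop :=
  ∀ V ∈ T.faces, ∃ b : Fin (N + 1) → (Fin N → ℝ),
    (∀ i, IsLatticePoint (b i)) ∧ (V : Set (Fin N → ℝ)) ⊆ Set.range b ∧
    ∃ M : Matrix (Fin N) (Fin N) ℤ, IsUnit M.det ∧
      ∀ i j, b i.succ j - b 0 j = (M i j : ℝ)

/-- A maximal simplex of a triangulation. -/
def IsMaximalFace (T : Triangulation N P) (V : Finset (Fin N → ℝ)) : Prop :=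
  V ∈ T.faces ∧ ∀ W ∈ T.faces, V ⊆ W → W = V

/-- A weight function witnessing regularity: a `T`-piecewise-affine convex function whose
restrictions to distinct maximal simplices are distinct affine functions. -/
def IsWeightFunction (T : Triangulation N P) (φ : (Fin N → ℝ) → ℝ) : Prop :=
  ConvexOn ℝ P φ ∧
  ∃ g : Finset (Fin N → ℝ) → ((Fin N → ℝ) →ᵃ[ℝ] ℝ),
    (∀ V ∈ T.faces, ∀ x ∈ convexHull ℝ (V : Set (Fin N → ℝ)), φ x = g V x) ∧
    ∀ V W : Finset (Fin N → ℝ), T.IsMaximalFace V → T.IsMaximalFace W → V ≠ W → g V ≠ g W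

/-- A triangulation is regular if it admits a weight function. -/
def IsRegular (T : Triangulation N P) : Prop := ∃ φ, T.IsWeightFunction φ

/-- The closed star of a point in a triangulation. -/
def clstar (T : Triangulation N P) (p : Fin N → ℝ) : Set (Fin N → ℝ) :=
  ⋃ V ∈ {V ∈ T.faces | p ∈ convexHull ℝ (V : Set (Fin N → ℝ))},
    convexHull ℝ (V : Set (Fin N → ℝ))

/-- The ibip ("induced by interior points") condition for a triangulation of a
`d`-dimensional polytope. -/
def IsIbip (T : Triangulation N P) (d : ℕ) : Prop :=
  (∀ p ∈ intrinsicFrontier ℝ P, IsLatticePoint p →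
    ∃ q ∈ intrinsicInterior ℝ P, IsLatticePoint q ∧
      ∃ V ∈ T.faces, (V : Set (Fin N → ℝ)) = {p, q}) ∧
  (∀ (r : ℕ) (ps : Fin (r + 1) → (Fin N → ℝ)),
    (∀ i, ps i ∈ intrinsicInterior ℝ P ∧ IsLatticePoint (ps i)) →
    setDim (⋂ i, T.clstar (ps i)) = d) ∧
  (∀ p ∈ intrinsicInterior ℝ P, IsLatticePoint p →
    ∃ S : Finset (Fin N → ℝ), T.clstar p = convexHull ℝ (S : Set (Fin N → ℝ)))

end Triangulation

/-- Number of lattice points of the `k`-th dilate of `P`. -/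
def ehrhartCount {N : ℕ} (P : Set (Fin N → ℝ)) (k : ℕ) : ℕ :=
  Nat.card ↥(latticePoints ((k : ℝ) • P))

/-- `δ` is the δ-vector of a `d`-dimensional polytope `P`:
`∑_k |kP ∩ ℤ^N| t^k = (δ_0 + δ_1 t + ⋯ + δ_d t^d)/(1-t)^{d+1}`, encoded by clearing the
denominator (note that `1 - t` is invertible in `ℤ⟦t⟧`). -/
def IsDeltaVector {N : ℕ} (P : Set (Fin N → ℝ)) (d : ℕ) (δ : ℕ → ℤ) : Prop :=
  (∀ i, d < i → δ i = 0) ∧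
  (PowerSeries.mk fun k => (ehrhartCount P k : ℤ)) * (1 - PowerSeries.X) ^ (d + 1) =
    PowerSeries.mk fun i => δ i

/-- The ideal `I` of nonfaces: generated by the monomials `x_{p_1} ⋯ x_{p_r}` such that
`conv{p_1, …, p_r}` is not a simplex of the complex with face set `F`. -/
def nonfaceIdeal {N : ℕ} (P : Set (Fin N → ℝ)) (F : Set (Finset (Fin N → ℝ))) :
    Ideal (MvPolynomial (latticePoints P) ℂ) :=
  Ideal.span {m | ∃ S : Finset (latticePoints P),
    (¬ ∃ V ∈ F, (V : Set (Fin N → ℝ)) = Subtype.val '' (S : Set (latticePoints P))) ∧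
    m = ∏ p ∈ S, X p}

/-- The linear form `∑_{p ∈ P ∩ ℤ^N} φ(p)·x_p` attached to the affine function
`φ(x) = c + ∑ a_i x_i` on `ℤ^N`. -/
def affineFormPoly {N : ℕ} (P : Set (Fin N → ℝ)) (c : ℤ) (a : Fin N → ℤ) :
    MvPolynomial (latticePoints P) ℂ :=
  ∑ᶠ p : latticePoints P, (((c : ℂ) + ∑ i, (a i : ℂ) * ((p : Fin N → ℝ) i : ℂ))) • X p

/-- The ideal `J` generated by the linear forms attached to all affine functions
`ℤ^N → ℤ`. -/
def linearIdeal {N : ℕ} (P : Set (Fin N → ℝ)) : Ideal (MvPolynomial (latticePoints P) ℂ) :=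
  Ideal.span (Set.range fun ca : ℤ × (Fin N → ℤ) => affineFormPoly P ca.1 ca.2)

/-- The Stanley–Reisner ring of the simplicial complex with face set `F`. -/
abbrev SRRing {N : ℕ} (P : Set (Fin N → ℝ)) (F : Set (Finset (Fin N → ℝ))) :=
  MvPolynomial (latticePoints P) ℂ ⧸ nonfaceIdeal P F

/-- The Chow ring `A^*` of the simplicial complex with face set `F`. -/
abbrev ChowRing {N : ℕ} (P : Set (Fin N → ℝ)) (F : Set (Finset (Fin N → ℝ))) :=
  MvPolynomial (latticePoints P) ℂ ⧸ (nonfaceIdeal P F + linearIdeal P)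

/-- The degree-`i` graded component `A^i` of the Chow ring. -/
def chowComponent {N : ℕ} (P : Set (Fin N → ℝ)) (F : Set (Finset (Fin N → ℝ))) (i : ℕ) :
    Submodule ℂ (ChowRing P F) :=
  Submodule.map (Ideal.Quotient.mkₐ ℂ (nonfaceIdeal P F + linearIdeal P)).toLinearMap
    (homogeneousSubmodule (latticePoints P) ℂ i)

lemma nonfaceIdeal_mono {N : ℕ} (P : Set (Fin N → ℝ)) {F F' : Set (Finset (Fin N → ℝ))}
    (h : F' ⊆ F) : nonfaceIdeal P F ≤ nonfaceIdeal P F' := by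
  apply Ideal.span_mono
  rintro m ⟨S, hS, rfl⟩
  exact ⟨S, fun ⟨V, hV, he⟩ => hS ⟨V, h hV, he⟩, rfl⟩

/-- The restriction map between Stanley–Reisner rings of a complex and a subcomplex,
sending `x_p` to `x_p` when `p` belongs to the subcomplex and to `0` otherwise. -/
def srRestrict {N : ℕ} (P : Set (Fin N → ℝ)) {F F' : Set (Finset (Fin N → ℝ))}
    (h : F' ⊆ F) : SRRing P F →+* SRRing P F' :=
  Ideal.Quotient.factor (nonfaceIdeal_mono P h)

/-- The restriction map between Chow rings of a complex and a subcomplex. -/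
def chowRestrict {N : ℕ} (P : Set (Fin N → ℝ)) {F F' : Set (Finset (Fin N → ℝ))}
    (h : F' ⊆ F) : ChowRing P F →+* ChowRing P F' :=
  Ideal.Quotient.factor (sup_le_sup_right (nonfaceIdeal_mono P h) _)

/-- The faces of `T` contained in the region `Q`; this is the induced triangulation
`T|_Q` of a subpolytope `Q` which is a union of simplices of `T`. -/
def Triangulation.restrictFaces {N : ℕ} {P : Set (Fin N → ℝ)} (T : Triangulation N P)
    (Q : Set (Fin N → ℝ)) : Set (Finset (Fin N → ℝ)) :=
  {V ∈ T.faces | convexHull ℝ (V : Set (Fin N → ℝ)) ⊆ Q}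

lemma Triangulation.restrictFaces_subset {N : ℕ} {P : Set (Fin N → ℝ)}
    (T : Triangulation N P) (Q : Set (Fin N → ℝ)) : T.restrictFaces Q ⊆ T.faces :=
  fun _ hV => hV.1

lemma Triangulation.restrictFaces_mono {N : ℕ} {P : Set (Fin N → ℝ)} (T : Triangulation N P)
    {Q Q' : Set (Fin N → ℝ)} (h : Q ⊆ Q') : T.restrictFaces Q ⊆ T.restrictFaces Q' :=
  fun _ hV => ⟨hV.1, hV.2.trans h⟩

/-- The interior lattice points of `P`. -/
abbrev IntPts {N : ℕ} (P : Set (Fin N → ℝ)) : Type :=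
  {x : Fin N → ℝ // x ∈ intrinsicInterior ℝ P ∧ IsLatticePoint x}

end EhrhartChow

namespace EhrhartChow

/-- The image of the variable `x_{p''}` under the pullback: `x_{ψ⁻¹(p'')}` if `p''` lies in
the image of `ψ`, and `0` otherwise. -/
def pullbackVar {N M : ℕ} (ψ : (Fin N → ℝ) →ᵃ[ℝ] (Fin M → ℝ))
    (P' : Set (Fin N → ℝ)) (P'' : Set (Fin M → ℝ)) (q : latticePoints P'') :
    MvPolynomial (latticePoints P') ℂ :=
  open Classical in
  if h : ∃ p : latticePoints P', ψ (p : Fin N → ℝ) = (q : Fin M → ℝ) then X h.choose else 0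

/-- The pullback `ψ^*` on polynomial rings, defined on generators by
`ψ^*(x_{p''}) = x_{ψ⁻¹(p'')}` if `p''` is in the image of `ψ` and `0` otherwise. -/
def pullbackHom {N M : ℕ} (ψ : (Fin N → ℝ) →ᵃ[ℝ] (Fin M → ℝ))
    (P' : Set (Fin N → ℝ)) (P'' : Set (Fin M → ℝ)) :
    MvPolynomial (latticePoints P'') ℂ →ₐ[ℂ] MvPolynomial (latticePoints P') ℂ :=
  aeval (pullbackVar ψ P' P'')

/-!
A nonface monomial of `T''` is sent by `ψ^*` either to `0`, when one of its vertices is not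
in the image of `ψ`, or to the monomial of its preimage, which is a nonface of `T'` because `ψ`
maps every face of `T'` onto a face of `T''`. An affine function `ℤ^M → ℤ` composed with `ψ` is
an affine function `ℤ^N → ℤ`, since `ψ` is determined by the lattice points `ψ 0` and
`ψ (Pi.single i 1)`; so `ψ^*` sends the linear form of `φ` to the linear form of `φ ∘ ψ`.
-/

lemma IsLatticePoint.exists_eq_intCast {N : ℕ} {x : Fin N → ℝ} (hx : IsLatticePoint x) :
    ∃ z : Fin N → ℤ, x = fun i => (z i : ℝ) := by
  choose z hz using hx
  exact ⟨z, funext hz⟩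

open Filter in
lemma IsLatticePolytope.finite_latticePoints {N : ℕ} {P : Set (Fin N → ℝ)}
    (hP : IsLatticePolytope P) : (latticePoints P).Finite := by
  obtain ⟨S, -, rfl⟩ := hP
  let cast : (Fin N → ℤ) → Fin N → ℝ := fun z i => z i
  have hcast : Tendsto cast cofinite (cocompact _) := by
    simpa only [coprodᵢ_cofinite, coprodᵢ_cocompact] using
      Tendsto.pi_map_coprodᵢ fun _ : Fin N => Int.tendsto_coe_cofinite
  refine ((tendsto_cofinite_cocompact_iff.1 hcast _
    (S.finite_toSet.isCompact_convexHull ℝ)).image cast).subset ?_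
  rintro x ⟨hx, hlat⟩
  obtain ⟨z, rfl⟩ := hlat.exists_eq_intCast
  exact ⟨z, hx, rfl⟩

lemma _root_.AffineMap.apply_eq_add_sum_smul {R ι E : Type*} [CommRing R] [Fintype ι]
    [DecidableEq ι] [AddCommGroup E] [Module R E] (f : (ι → R) →ᵃ[R] E) (x : ι → R) :
    f x = f 0 + ∑ i, x i • (f (Pi.single i 1) - f 0) := by
  have hlin : ∀ y, f y - f 0 = f.linear y := fun y => by
    simpa using (f.linearMap_vsub y 0).symm
  rw [← sub_eq_iff_eq_add', hlin, f.linear.pi_apply_eq_sum_univ]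
  refine Finset.sum_congr rfl fun i _ => ?_
  rw [hlin]
  congr 2
  ext j
  simp [Pi.single_apply, eq_comm]

lemma exists_intAffine_comp {N M : ℕ} (ψ : (Fin N → ℝ) →ᵃ[ℝ] (Fin M → ℝ))
    (hlat : ∀ x, IsLatticePoint x → IsLatticePoint (ψ x)) (c : ℤ) (a : Fin M → ℤ) :
    ∃ (c' : ℤ) (a' : Fin N → ℤ), ∀ x : Fin N → ℝ,
      (c' : ℝ) + ∑ i, a' i * x i = c + ∑ j, a j * ψ x j := by
  classical
  have hlat0 : IsLatticePoint (0 : Fin N → ℝ) := fun _ => ⟨0, by simp⟩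
  have hlat1 : ∀ i, IsLatticePoint (Pi.single i 1 : Fin N → ℝ) := fun i k => by
    rcases eq_or_ne k i with rfl | h
    · exact ⟨1, by simp⟩
    · exact ⟨0, by simp [h]⟩
  obtain ⟨z, hz⟩ := (hlat 0 hlat0).exists_eq_intCast
  choose w hw using fun i => (hlat _ (hlat1 i)).exists_eq_intCast
  refine ⟨c + ∑ j, a j * z j, fun i => ∑ j, a j * (w i j - z j), fun x => ?_⟩
  simp only [ψ.apply_eq_add_sum_smul x, hz, hw, Pi.add_apply, Finset.sum_apply, Pi.smul_apply,
    Pi.sub_apply, smul_eq_mul]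
  push_cast
  simp only [mul_add, Finset.sum_add_distrib, Finset.mul_sum, Finset.sum_mul, add_assoc]
  rw [Finset.sum_comm]
  congr 2
  exact Finset.sum_congr rfl fun _ _ => Finset.sum_congr rfl fun _ _ => by ring

lemma Triangulation.mapsTo_of_forall_image_mem_faces {N M : ℕ} {P' : Set (Fin N → ℝ)}
    {P'' : Set (Fin M → ℝ)} (T' : Triangulation N P') (T'' : Triangulation M P'')
    {ψ : (Fin N → ℝ) →ᵃ[ℝ] (Fin M → ℝ)}
    (hsim : ∀ V ∈ T'.faces, ∃ W ∈ T''.faces, (W : Set (Fin M → ℝ)) = ψ '' V) :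
    Set.MapsTo ψ P' P'' := by
  intro x hx
  rw [← T'.union_eq, Set.mem_iUnion₂] at hx
  obtain ⟨V, hV, hxV⟩ := hx
  obtain ⟨W, hW, hWV⟩ := hsim V hV
  rw [← T''.union_eq, Set.mem_iUnion₂]
  exact ⟨W, hW, hWV ▸ ψ.image_convexHull _ ▸ Set.mem_image_of_mem ψ hxV⟩

section Pullback

variable {N M : ℕ} {P' : Set (Fin N → ℝ)} {P'' : Set (Fin M → ℝ)}
  {ψ : (Fin N → ℝ) →ᵃ[ℝ] (Fin M → ℝ)}

lemma pullbackHom_X (q : latticePoints P'') :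
    pullbackHom ψ P' P'' (X q) = pullbackVar ψ P' P'' q :=
  aeval_X _ q

lemma pullbackVar_of_forall_ne {q : latticePoints P''}
    (hq : ∀ p : latticePoints P', ψ p ≠ q) : pullbackVar ψ P' P'' q = 0 := by
  rw [pullbackVar, dif_neg (not_exists.2 hq)]

lemma pullbackVar_restrict (hmaps : Set.MapsTo ψ (latticePoints P') (latticePoints P''))
    (hinj : Set.InjOn ψ (latticePoints P')) (p : latticePoints P') :
    pullbackVar ψ P' P'' (hmaps.restrict ψ _ _ p) = X p := by
  have he : ∃ p' : latticePoints P', ψ p' = hmaps.restrict ψ _ _ p := ⟨p, rfl⟩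
  rw [pullbackVar, dif_pos he]
  exact congrArg X (Subtype.ext (hinj he.choose.2 p.2 he.choose_spec))

lemma isHomogeneous_pullbackVar (q : latticePoints P'') :
    (pullbackVar ψ P' P'' q).IsHomogeneous 1 := by
  unfold pullbackVar
  split_ifs
  · exact isHomogeneous_X _ _
  · exact isHomogeneous_zero _ _ _

lemma isHomogeneous_pullbackHom {f : MvPolynomial (latticePoints P'') ℂ} {i : ℕ}
    (hf : f.IsHomogeneous i) : (pullbackHom ψ P' P'' f).IsHomogeneous i := by
  rw [pullbackHom, ← one_mul i]
  exact hf.aeval _ isHomogeneous_pullbackVar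

lemma nonfaceIdeal_le_comap_pullbackHom {F' : Set (Finset (Fin N → ℝ))}
    {F'' : Set (Finset (Fin M → ℝ))} (hmaps : Set.MapsTo ψ (latticePoints P') (latticePoints P''))
    (hinj : Set.InjOn ψ (latticePoints P'))
    (hsim : ∀ V ∈ F', ∃ W ∈ F'', (W : Set (Fin M → ℝ)) = ψ '' V) :
    nonfaceIdeal P'' F'' ≤ (nonfaceIdeal P' F').comap (pullbackHom ψ P' P'') := by
  set ι := hmaps.restrict ψ _ _
  have hι : Function.Injective ι := hmaps.restrict_inj.2 hinj
  rw [nonfaceIdeal, Ideal.span_le]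
  rintro _ ⟨S, hS, rfl⟩
  rw [SetLike.mem_coe, Ideal.mem_comap, map_prod]
  simp_rw [pullbackHom_X]
  by_cases hrange : ↑S ⊆ Set.range ι
  · rw [← Finset.prod_preimage ι S hι.injOn _ fun q hq hq' => absurd (hrange hq) hq']
    simp_rw [ι, pullbackVar_restrict hmaps hinj]
    refine Ideal.subset_span ⟨_, fun ⟨V, hV, hVS⟩ => hS ?_, rfl⟩
    obtain ⟨W, hW, hWV⟩ := hsim V hV
    refine ⟨W, hW, ?_⟩
    rw [hWV, hVS, Finset.coe_preimage, Set.image_image,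
      show (fun p : latticePoints P' => ψ p) = Subtype.val ∘ ι from rfl, Set.image_comp,
      Set.image_preimage_eq_of_subset hrange]
  · obtain ⟨q, hqS, hq⟩ := Set.not_subset.1 hrange
    rw [Finset.prod_eq_zero hqS (pullbackVar_of_forall_ne fun p hp => hq ⟨p, Subtype.ext hp⟩)]
    exact zero_mem _

lemma pullbackHom_finsum_smul_X [Finite (latticePoints P'')]
    (hmaps : Set.MapsTo ψ (latticePoints P') (latticePoints P''))
    (hinj : Set.InjOn ψ (latticePoints P')) (w : (Fin M → ℝ) → ℂ) :
    pullbackHom ψ P' P'' (∑ᶠ q : latticePoints P'', w q • X q) =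
      ∑ᶠ p : latticePoints P', w (ψ p) • X p := by
  rw [map_finsum _ (Set.toFinite _)]
  simp_rw [map_smul, pullbackHom_X]
  rw [← finsum_mem_univ, finsum_mem_inter_support_eq' _ _ (Set.range (hmaps.restrict ψ _ _)),
    finsum_mem_range (hmaps.restrict_inj.2 hinj)]
  · simp_rw [pullbackVar_restrict hmaps hinj, Set.MapsTo.val_restrict_apply]
  · intro q hq
    simp only [Set.mem_univ, true_iff]
    by_contra hq'
    refine hq ?_
    dsimp only
    rw [pullbackVar_of_forall_ne fun p hp => hq' ⟨p, Subtype.ext hp⟩, smul_zero]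

lemma linearIdeal_le_comap_pullbackHom [Finite (latticePoints P'')]
    (hmaps : Set.MapsTo ψ (latticePoints P') (latticePoints P''))
    (hinj : Set.InjOn ψ (latticePoints P'))
    (hlat : ∀ x, IsLatticePoint x → IsLatticePoint (ψ x)) :
    linearIdeal P'' ≤ (linearIdeal P').comap (pullbackHom ψ P' P'') := by
  rw [linearIdeal, Ideal.span_le]
  rintro _ ⟨⟨c, a⟩, rfl⟩
  obtain ⟨c', a', hca⟩ := exists_intAffine_comp ψ hlat c a
  have hform : pullbackHom ψ P' P'' (affineFormPoly P'' c a) = affineFormPoly P' c' a' := by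
    rw [affineFormPoly, affineFormPoly,
      pullbackHom_finsum_smul_X hmaps hinj fun y => (c : ℂ) + ∑ j, (a j : ℂ) * (y j : ℂ)]
    congr! 3 with p
    have := congrArg ((↑) : ℝ → ℂ) (hca p)
    push_cast at this
    exact this.symm
  exact Ideal.subset_span ⟨(c', a'), hform.symm⟩

end Pullback

theorem pullback_chowRing_general {N M : ℕ} {P' : Set (Fin N → ℝ)} {P'' : Set (Fin M → ℝ)}
    (hP'' : IsLatticePolytope P'')
    (T' : Triangulation N P') (T'' : Triangulation M P'')
    (ψ : (Fin N → ℝ) →ᵃ[ℝ] (Fin M → ℝ)) (hinj : Function.Injective ψ)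
    (hlat : ∀ x : Fin N → ℝ, IsLatticePoint x → IsLatticePoint (ψ x))
    (hsim : ∀ V ∈ T'.faces, ∃ W ∈ T''.faces,
      (W : Set (Fin M → ℝ)) = ψ '' (V : Set (Fin N → ℝ))) :
    (∀ f ∈ nonfaceIdeal P'' T''.faces, pullbackHom ψ P' P'' f ∈ nonfaceIdeal P' T'.faces) ∧
    (∀ f ∈ linearIdeal P'', pullbackHom ψ P' P'' f ∈ linearIdeal P') ∧
    ∃ Ψ : ChowRing P'' T''.faces →ₐ[ℂ] ChowRing P' T'.faces,
      (∀ f : MvPolynomial (latticePoints P'') ℂ,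
        Ψ (Ideal.Quotient.mk _ f) = Ideal.Quotient.mk _ (pullbackHom ψ P' P'' f)) ∧
      ∀ i : ℕ, ∀ x ∈ chowComponent P'' T''.faces i, Ψ x ∈ chowComponent P' T'.faces i := by
  have hmaps : Set.MapsTo ψ (latticePoints P') (latticePoints P'') := fun x hx =>
    ⟨T'.mapsTo_of_forall_image_mem_faces T'' hsim hx.1, hlat x hx.2⟩
  have := hP''.finite_latticePoints.to_subtype
  have hI := nonfaceIdeal_le_comap_pullbackHom hmaps hinj.injOn hsim
  have hJ := linearIdeal_le_comap_pullbackHom hmaps hinj.injOn hlat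
  have hIJ : nonfaceIdeal P'' T''.faces + linearIdeal P'' ≤
      (nonfaceIdeal P' T'.faces + linearIdeal P').comap (pullbackHom ψ P' P'') :=
    sup_le (hI.trans (Ideal.comap_mono le_sup_left)) (hJ.trans (Ideal.comap_mono le_sup_right))
  refine ⟨fun f hf => hI hf, fun f hf => hJ hf, Ideal.quotientMapₐ _ _ hIJ, fun f => rfl, ?_⟩
  rintro i _ ⟨f, hf, rfl⟩
  exact ⟨_, isHomogeneous_pullbackHom ((mem_homogeneousSubmodule _ _).1 hf), rfl⟩

/-- **Proposition (pullbacks along embeddings of triangulations).** If an injective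
`ℤ`-affine map `ψ` carries every simplex of `T'` affine-isomorphically onto a simplex of
`T''`, then `ψ^*(I'') ⊆ I'` and `ψ^*(J'') ⊆ J'`, so `ψ^*` induces a graded `ℂ`-algebra
homomorphism `A^*(T'') → A^*(T')`. -/
theorem pullback_chowRing {N M : ℕ} {P' : Set (Fin N → ℝ)} {P'' : Set (Fin M → ℝ)}
    (hP' : IsLatticePolytope P') (hP'' : IsLatticePolytope P'')
    (T' : Triangulation N P') (T'' : Triangulation M P'')
    (hu' : T'.IsUnimodular) (hu'' : T''.IsUnimodular)
    (ψ : (Fin N → ℝ) →ᵃ[ℝ] (Fin M → ℝ)) (hinj : Function.Injective ψ)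
    (hlat : ∀ x : Fin N → ℝ, IsLatticePoint x → IsLatticePoint (ψ x))
    (hsim : ∀ V ∈ T'.faces, ∃ W ∈ T''.faces,
      (W : Set (Fin M → ℝ)) = ψ '' (V : Set (Fin N → ℝ))) :
    (∀ f ∈ nonfaceIdeal P'' T''.faces, pullbackHom ψ P' P'' f ∈ nonfaceIdeal P' T'.faces) ∧
    (∀ f ∈ linearIdeal P'', pullbackHom ψ P' P'' f ∈ linearIdeal P') ∧
    ∃ Ψ : ChowRing P'' T''.faces →ₐ[ℂ] ChowRing P' T'.faces,
      (∀ f : MvPolynomial (latticePoints P'') ℂ,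
        Ψ (Ideal.Quotient.mk _ f) = Ideal.Quotient.mk _ (pullbackHom ψ P' P'' f)) ∧
      ∀ i : ℕ, ∀ x ∈ chowComponent P'' T''.faces i, Ψ x ∈ chowComponent P' T'.faces i :=
  pullback_chowRing_general hP'' T' T'' ψ hinj hlat hsim

end EhrhartChow
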